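/- Let α ∈ O(2) be an element of the dihedral group generated by reflections across lines at angles 0 and π/b with b odd, and let r₂ be the reflection across the y-axis. If v ∈ ℝ² is a nonzero vector with (α ∘ r₂)(v) = ±v and the direction of v is not a multiple of π/b nor π/2 plus a multiple of π/b (mod π), then α ∘ r₂ is the rotation by π and α is the reflection across the x-axis. -/

import Mathlib

/-- Rotation of ℝ² by angle `φ`, as a 2×2 matrix. -/
noncomputable def rotMat (φ : ℝ) : Matrix (Fin 2) (Fin 2) ℝ :=
  !![Real.cos φ, -Real.sin φ; Real.sin φ, Real.cos φ]

/-- Linear reflection of ℝ² across the line through the origin at angle `θ`. -/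
noncomputable def reflMat (θ : ℝ) : Matrix (Fin 2) (Fin 2) ℝ :=
  !![Real.cos (2*θ), Real.sin (2*θ); Real.sin (2*θ), -Real.cos (2*θ)]

/-! The group generated by the reflections at angles `0` and `π/b` consists of the rotations by
`2kπ/b` and the reflections at angles `kπ/b`. If `α` is a rotation, `α * r₂` is the reflection at
angle `kπ/b + π/2`, whose eigenvectors point in the excluded directions `kπ/b + π/2` and `kπ/b`.
So `α` is the reflection at angle `kπ/b` and `α * r₂` the rotation by `2kπ/b - π`. A rotation with
a real eigenvector is `±1`, and `+1` would mean `kπ/b ≡ π/2 mod π`, i.e. `2k = b(2n+1)`, impossible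
for `b` odd. -/

open Real Matrix

lemma rotMat_zero : rotMat 0 = 1 := by
  simp [rotMat, Matrix.one_fin_two]

lemma rotMat_mul_rotMat (φ ψ : ℝ) : rotMat φ * rotMat ψ = rotMat (φ + ψ) := by
  simp only [rotMat, mul_fin_two, cos_add, sin_add]
  ext i j; fin_cases i <;> fin_cases j <;> simp <;> ring

lemma rotMat_mul_reflMat (φ θ : ℝ) : rotMat φ * reflMat θ = reflMat (θ + φ / 2) := by
  have h : 2 * (θ + φ / 2) = 2 * θ + φ := by ring
  simp only [rotMat, reflMat, mul_fin_two, h, cos_add, sin_add]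
  ext i j; fin_cases i <;> fin_cases j <;> simp <;> ring

lemma reflMat_mul_rotMat (θ φ : ℝ) : reflMat θ * rotMat φ = reflMat (θ - φ / 2) := by
  have h : 2 * (θ - φ / 2) = 2 * θ - φ := by ring
  simp only [rotMat, reflMat, mul_fin_two, h, cos_sub, sin_sub]
  ext i j; fin_cases i <;> fin_cases j <;> simp <;> ring

lemma reflMat_mul_reflMat (θ₁ θ₂ : ℝ) : reflMat θ₁ * reflMat θ₂ = rotMat (2 * (θ₁ - θ₂)) := by
  have h : 2 * (θ₁ - θ₂) = 2 * θ₁ - 2 * θ₂ := by ring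
  simp only [rotMat, reflMat, mul_fin_two, h, cos_sub, sin_sub]
  ext i j; fin_cases i <;> fin_cases j <;> simp <;> ring

lemma reflMat_mul_self (θ : ℝ) : reflMat θ * reflMat θ = 1 := by
  rw [reflMat_mul_reflMat, sub_self, mul_zero, rotMat_zero]

lemma transpose_rotMat (φ : ℝ) : (rotMat φ)ᵀ = rotMat (-φ) := by
  ext i j; fin_cases i <;> fin_cases j <;> simp [rotMat]

lemma transpose_reflMat (θ : ℝ) : (reflMat θ)ᵀ = reflMat θ := by
  ext i j; fin_cases i <;> fin_cases j <;> simp [reflMat]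

lemma reflMat_add_pi_div_two (θ : ℝ) : reflMat (θ + π / 2) = -reflMat θ := by
  have h : 2 * (θ + π / 2) = 2 * θ + π := by ring
  simp [reflMat, h, cos_add_pi, sin_add_pi]

lemma orthogonalGroup_coe_inv {n R : Type*} [Fintype n] [DecidableEq n] [CommRing R]
    (A : orthogonalGroup n R) :
    ((A⁻¹ : orthogonalGroup n R) : Matrix n n R) = (A : Matrix n n R)ᵀ :=
  rfl

lemma eq_rotMat_or_eq_reflMat_of_mem_closure (θ : ℝ) {g₀ g₁ α : orthogonalGroup (Fin 2) ℝ}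
    (hg₀ : (g₀ : Matrix (Fin 2) (Fin 2) ℝ) = reflMat 0)
    (hg₁ : (g₁ : Matrix (Fin 2) (Fin 2) ℝ) = reflMat θ) (hα : α ∈ Subgroup.closure {g₀, g₁}) :
    (∃ k : ℤ, (α : Matrix (Fin 2) (Fin 2) ℝ) = rotMat (2 * k * θ)) ∨
      ∃ k : ℤ, (α : Matrix (Fin 2) (Fin 2) ℝ) = reflMat (k * θ) := by
  induction hα using Subgroup.closure_induction with
  | mem x hx =>
    rcases hx with rfl | rfl
    · exact .inr ⟨0, by simp [hg₀]⟩
    · exact .inr ⟨1, by simp [hg₁]⟩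
  | one => exact .inl ⟨0, by simp [rotMat_zero]⟩
  | mul x y _ _ hx hy =>
    rw [UnitaryGroup.mul_val]
    rcases hx with ⟨k, hk⟩ | ⟨k, hk⟩ <;> rcases hy with ⟨l, hl⟩ | ⟨l, hl⟩ <;> rw [hk, hl]
    · exact .inl ⟨k + l, by rw [rotMat_mul_rotMat]; push_cast; ring_nf⟩
    · exact .inr ⟨l + k, by rw [rotMat_mul_reflMat]; push_cast; ring_nf⟩
    · exact .inr ⟨k - l, by rw [reflMat_mul_rotMat]; push_cast; ring_nf⟩
    · exact .inl ⟨k - l, by rw [reflMat_mul_reflMat]; push_cast; ring_nf⟩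
  | inv x _ hx =>
    rw [orthogonalGroup_coe_inv]
    rcases hx with ⟨k, hk⟩ | ⟨k, hk⟩ <;> rw [hk]
    · exact .inl ⟨-k, by rw [transpose_rotMat]; push_cast; ring_nf⟩
    · exact .inr ⟨k, transpose_reflMat _⟩

lemma exists_eq_smul_of_reflMat_mulVec_eq_self {θ : ℝ} {v : Fin 2 → ℝ}
    (h : reflMat θ *ᵥ v = v) : ∃ t : ℝ, v = t • ![cos θ, sin θ] := by
  have h₀ := congrFun h 0
  have h₁ := congrFun h 1
  simp [reflMat, mulVec, dotProduct, Fin.sum_univ_two, cos_two_mul, sin_two_mul] at h₀ h₁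
  have hp := sin_sq_add_cos_sq θ
  -- `v` is its own orthogonal projection onto the mirror line
  refine ⟨cos θ * v 0 + sin θ * v 1, ?_⟩
  ext i; fin_cases i <;> simp
  · linear_combination (-1/2) * h₀
  · linear_combination (-1/2) * h₁ - v 1 * hp

lemma sin_eq_zero_of_rotMat_mulVec_eq_smul {φ c : ℝ} {v : Fin 2 → ℝ} (hv : v ≠ 0)
    (h : rotMat φ *ᵥ v = c • v) : sin φ = 0 := by
  have h₀ := congrFun h 0
  have h₁ := congrFun h 1
  simp [rotMat, mulVec, dotProduct, Fin.sum_univ_two] at h₀ h₁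
  have hpos : 0 < v 0 ^ 2 + v 1 ^ 2 := by
    have : v 0 ≠ 0 ∨ v 1 ≠ 0 := by
      contrapose! hv
      ext i; fin_cases i <;> simp [hv]
    rcases this with h | h <;> positivity
  have : sin φ * (v 0 ^ 2 + v 1 ^ 2) = 0 := by linear_combination v 0 * h₁ - v 1 * h₀
  exact (mul_eq_zero.mp this).resolve_right hpos.ne'

lemma int_mul_pi_div_ne_pi_div_two_add_int_mul_pi {b : ℕ} (hb : Odd b) (k n : ℤ) :
    k * π / b ≠ π / 2 + n * π := by
  intro h
  have hb₀ : (b : ℝ) ≠ 0 := by exact_mod_cast hb.pos.ne'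
  have hR : (2 * k : ℝ) = b * (2 * n + 1) := by
    field_simp at h
    linear_combination h
  have hZ : 2 * k = (b : ℤ) * (2 * n + 1) := by exact_mod_cast hR
  exact Int.not_even_iff_odd.mpr (hb.natCast.mul (odd_two_mul_add_one n)) ⟨k, by rw [← hZ]; ring⟩

lemma rotMat_eq_rotMat_pi_of_sin_eq_zero {φ : ℝ} (hs : sin φ = 0) (hc : cos φ ≠ 1) :
    rotMat φ = rotMat π := by
  have hc' : cos φ = -1 := by
    have := sin_sq_add_cos_sq φ
    have h : (cos φ - 1) * (cos φ + 1) = 0 := by linear_combination this - sin φ * hs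
    exact eq_neg_of_add_eq_zero_left ((mul_eq_zero.mp h).resolve_left (sub_ne_zero.mpr hc))
  simp [rotMat, hs, hc']

theorem eigenvector_forces_rotation_pi_general (b : ℕ) (hbo : Odd b)
    (g₀ g₁ r₂ α : Matrix.orthogonalGroup (Fin 2) ℝ)
    (hg₀ : (g₀ : Matrix (Fin 2) (Fin 2) ℝ) = reflMat 0)
    (hg₁ : (g₁ : Matrix (Fin 2) (Fin 2) ℝ) = reflMat (Real.pi / b))
    (hr₂ : (r₂ : Matrix (Fin 2) (Fin 2) ℝ) = reflMat (Real.pi / 2))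
    (hα : α ∈ Subgroup.closure {g₀, g₁})
    (v : Fin 2 → ℝ) (hv : v ≠ 0)
    (heig : ((α * r₂ : Matrix.orthogonalGroup (Fin 2) ℝ) : Matrix (Fin 2) (Fin 2) ℝ).mulVec v = v ∨
            ((α * r₂ : Matrix.orthogonalGroup (Fin 2) ℝ) : Matrix (Fin 2) (Fin 2) ℝ).mulVec v = -v)
    (hdir : ∀ k : ℤ,
      (¬∃ t : ℝ, v = t • ![Real.cos ((k : ℝ) * Real.pi / b), Real.sin ((k : ℝ) * Real.pi / b)]) ∧
      (¬∃ t : ℝ, v = t • ![Real.cos (Real.pi / 2 + (k : ℝ) * Real.pi / b),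
                          Real.sin (Real.pi / 2 + (k : ℝ) * Real.pi / b)])) :
    ((α * r₂ : Matrix.orthogonalGroup (Fin 2) ℝ) : Matrix (Fin 2) (Fin 2) ℝ) = rotMat Real.pi ∧
      (α : Matrix (Fin 2) (Fin 2) ℝ) = reflMat 0 := by
  have hcoe : ((α * r₂ : orthogonalGroup (Fin 2) ℝ) : Matrix (Fin 2) (Fin 2) ℝ) =
      α * reflMat (π / 2) := by
    rw [UnitaryGroup.mul_val, hr₂]
  rcases eq_rotMat_or_eq_reflMat_of_mem_closure (π / b) hg₀ hg₁ hα with ⟨k, hk⟩ | ⟨k, hk⟩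
  · have hrefl : ((α * r₂ : orthogonalGroup (Fin 2) ℝ) : Matrix (Fin 2) (Fin 2) ℝ) =
        reflMat (k * π / b + π / 2) := by
      rw [hcoe, hk, rotMat_mul_reflMat]
      ring_nf
    rw [hrefl] at heig
    rcases heig with h | h
    · obtain ⟨t, ht⟩ := exists_eq_smul_of_reflMat_mulVec_eq_self h
      exact absurd ⟨t, by rw [ht, add_comm]⟩ (hdir k).2
    · rw [reflMat_add_pi_div_two, neg_mulVec, neg_inj] at h
      exact absurd (exists_eq_smul_of_reflMat_mulVec_eq_self h) (hdir k).1
  · have hrot : ((α * r₂ : orthogonalGroup (Fin 2) ℝ) : Matrix (Fin 2) (Fin 2) ℝ) =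
        rotMat (2 * (k * π / b - π / 2)) := by
      rw [hcoe, hk, reflMat_mul_reflMat, mul_div_assoc]
    have hsin : sin (2 * (k * π / b - π / 2)) = 0 := by
      rw [hrot] at heig
      rcases heig with h | h
      · exact sin_eq_zero_of_rotMat_mulVec_eq_smul (c := 1) hv (by rw [h, one_smul])
      · exact sin_eq_zero_of_rotMat_mulVec_eq_smul (c := -1) hv (by rw [h, neg_one_smul])
    have hcos : cos (2 * (k * π / b - π / 2)) ≠ 1 := fun h ↦ by
      obtain ⟨n, hn⟩ := (cos_eq_one_iff _).mp h
      exact int_mul_pi_div_ne_pi_div_two_add_int_mul_pi hbo k n (by linarith)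
    have hπ := hrot.trans (rotMat_eq_rotMat_pi_of_sin_eq_zero hsin hcos)
    refine ⟨hπ, ?_⟩
    calc (α : Matrix (Fin 2) (Fin 2) ℝ)
        = ((α * r₂ : orthogonalGroup (Fin 2) ℝ) : Matrix (Fin 2) (Fin 2) ℝ) * reflMat (π / 2) := by
          rw [hcoe, mul_assoc, reflMat_mul_self, mul_one]
      _ = reflMat 0 := by
          rw [hπ, rotMat_mul_reflMat, show π / 2 + π / 2 = 0 + π / 2 + π / 2 by ring,
            reflMat_add_pi_div_two, reflMat_add_pi_div_two, neg_neg]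

/-- Let `α` belong to the dihedral group generated by reflections across lines at angles
`0` and `π/b` (`b` odd), and `r₂` the reflection across the `y`-axis. If a nonzero vector
`v` satisfies `(α * r₂) v = ±v` and the direction of `v` is neither a multiple of `π/b`
nor `π/2` plus a multiple of `π/b`, then `α * r₂` is rotation by `π` and `α` is the
reflection across the `x`-axis. -/
theorem eigenvector_forces_rotation_pi (b : ℕ) (hb : 0 < b) (hbo : Odd b)
    (g₀ g₁ r₂ α : Matrix.orthogonalGroup (Fin 2) ℝ)
    (hg₀ : (g₀ : Matrix (Fin 2) (Fin 2) ℝ) = reflMat 0)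
    (hg₁ : (g₁ : Matrix (Fin 2) (Fin 2) ℝ) = reflMat (Real.pi / b))
    (hr₂ : (r₂ : Matrix (Fin 2) (Fin 2) ℝ) = reflMat (Real.pi / 2))
    (hα : α ∈ Subgroup.closure {g₀, g₁})
    (v : Fin 2 → ℝ) (hv : v ≠ 0)
    (heig : ((α * r₂ : Matrix.orthogonalGroup (Fin 2) ℝ) : Matrix (Fin 2) (Fin 2) ℝ).mulVec v = v ∨
            ((α * r₂ : Matrix.orthogonalGroup (Fin 2) ℝ) : Matrix (Fin 2) (Fin 2) ℝ).mulVec v = -v)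
    (hdir : ∀ k : ℤ,
      (¬∃ t : ℝ, v = t • ![Real.cos ((k : ℝ) * Real.pi / b), Real.sin ((k : ℝ) * Real.pi / b)]) ∧
      (¬∃ t : ℝ, v = t • ![Real.cos (Real.pi / 2 + (k : ℝ) * Real.pi / b),
                          Real.sin (Real.pi / 2 + (k : ℝ) * Real.pi / b)])) :
    ((α * r₂ : Matrix.orthogonalGroup (Fin 2) ℝ) : Matrix (Fin 2) (Fin 2) ℝ) = rotMat Real.pi ∧
      (α : Matrix (Fin 2) (Fin 2) ℝ) = reflMat 0 :=
  eigenvector_forces_rotation_pi_general b hbo g₀ g₁ r₂ α hg₀ hg₁ hr₂ hα v hv heig hdir
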